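/- arXiv:2101.05241 — 3 statements merged into one kernel-verified Lean document; each statement's English description precedes it below -/
import Mathlib

section
/- If G is a graph whose complement is the disjoint union of K_2 and some graph H, and G can be written as a clique sum of two graphs G_1 and G_2 over a common clique C, then G is isomorphic to the clique sum of two copies of K_n over a common (n-1)-clique for some n. -/
open SimpleGraph

/-- `G` decomposes as a clique sum of the induced subgraphs on `A` and `B`:
`A` and `B` cover the vertices, every edge lies within `A` or within `B`,
the common part `A ∩ B` is a clique, and both sides are strictly larger than the
common part. -/
def SimpleGraph.IsCliqueSumDecomp {V : Type*} (G : SimpleGraph V) (A B : Set V) : Prop :=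
  A ∪ B = Set.univ ∧ G.IsClique (A ∩ B) ∧
    (∀ a b, G.Adj a b → (a ∈ A ∧ b ∈ A) ∨ (a ∈ B ∧ b ∈ B)) ∧
    (A \ B).Nonempty ∧ (B \ A).Nonempty

/-- Auxiliary: in a clique-sum decomposition of such a `G`, every vertex of
`B \ A` comes from the `Fin 2` part. -/
lemma aux_inl {W : Type*} (G : SimpleGraph (Fin 2 ⊕ W))
    (hne : ¬ G.Adj (Sum.inl 0) (Sum.inl 1))
    (hcross : ∀ (i : Fin 2) (w : W), G.Adj (Sum.inl i) (Sum.inr w))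
    (A B : Set (Fin 2 ⊕ W))
    (hclique : G.IsClique (A ∩ B))
    (hedge : ∀ a b, G.Adj a b → (a ∈ A ∧ b ∈ A) ∨ (a ∈ B ∧ b ∈ B))
    (hAB : (A \ B).Nonempty) :
    ∀ z ∈ B \ A, ∃ j : Fin 2, z = Sum.inl j := by
  rintro z ⟨hzB, hzA⟩
  cases z with
  | inl j => exact ⟨j, rfl⟩
  | inr b =>
    exfalso
    obtain ⟨x, hxA, hxB⟩ := hAB
    cases x with
    | inl i =>
      rcases hedge _ _ (hcross i b) with ⟨_, h2⟩ | ⟨h1, _⟩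
      · exact hzA h2
      · exact hxB h1
    | inr a =>
      have hu : Sum.inl (0 : Fin 2) ∈ A ∩ B := by
        constructor
        · rcases hedge _ _ (hcross 0 a) with ⟨h1, _⟩ | ⟨_, h2⟩
          · exact h1
          · exact absurd h2 hxB
        · rcases hedge _ _ (hcross 0 b) with ⟨_, h2⟩ | ⟨h1, _⟩
          · exact absurd h2 hzA
          · exact h1
      have hv : Sum.inl (1 : Fin 2) ∈ A ∩ B := by
        constructor
        · rcases hedge _ _ (hcross 1 a) with ⟨h1, _⟩ | ⟨_, h2⟩
          · exact h1
          · exact absurd h2 hxB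
        · rcases hedge _ _ (hcross 1 b) with ⟨_, h2⟩ | ⟨h1, _⟩
          · exact absurd h2 hzA
          · exact h1
      exact hne (hclique hu hv (by simp))

/-- If the complement of `G` is the disjoint union of `K₂` and some graph `H`, then any
clique sum decomposition of `G` exhibits `G` as the clique sum of two copies of `Kₙ`
over a common `(n-1)`-clique. -/
theorem stmt0 {W : Type*} [Fintype W] (H : SimpleGraph W)
    (G : SimpleGraph (Fin 2 ⊕ W))
    (hG : Gᶜ = (⊤ : SimpleGraph (Fin 2)) ⊕g H)
    (A B : Set (Fin 2 ⊕ W)) (h : G.IsCliqueSumDecomp A B) :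
    ∃ n : ℕ, A.ncard = n ∧ B.ncard = n ∧ (A ∩ B).ncard = n - 1 ∧
      G.IsClique A ∧ G.IsClique B := by
  obtain ⟨hcov, hclique, hedge, hAB, hBA⟩ := h
  have hne : ¬ G.Adj (Sum.inl 0) (Sum.inl 1) := by
    have : Gᶜ.Adj (Sum.inl 0) (Sum.inl 1) := by rw [hG]; simp
    exact ((G.compl_adj _ _).mp this).2
  have hcross : ∀ (i : Fin 2) (w : W), G.Adj (Sum.inl i) (Sum.inr w) := by
    intro i w
    by_contra hn
    have : Gᶜ.Adj (Sum.inl i) (Sum.inr w) := (G.compl_adj _ _).mpr ⟨by simp, hn⟩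
    rw [hG] at this
    simp at this
  have hclique' : G.IsClique (B ∩ A) := by rwa [Set.inter_comm]
  have hedge' : ∀ a b, G.Adj a b → (a ∈ B ∧ b ∈ B) ∨ (a ∈ A ∧ b ∈ A) :=
    fun a b hab => (hedge a b hab).symm
  have lem1 := aux_inl G hne hcross A B hclique hedge hAB
  have lem2 := aux_inl G hne hcross B A hclique' hedge' hBA
  obtain ⟨x, hx⟩ := hAB
  obtain ⟨y, hy⟩ := hBA
  obtain ⟨i, rfl⟩ := lem2 x hx
  obtain ⟨j, rfl⟩ := lem1 y hy
  have hij : i ≠ j := by rintro rfl; exact hy.2 hx.1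
  have hall : ∀ k : Fin 2, k = i ∨ k = j := by
    intro k; fin_cases i <;> fin_cases j <;> fin_cases k <;> simp_all
  set x : Fin 2 ⊕ W := Sum.inl i with hxdef
  set y : Fin 2 ⊕ W := Sum.inl j with hydef
  have hADB : A \ B = {x} := by
    ext z
    constructor
    · intro hz
      obtain ⟨k, rfl⟩ := lem2 z hz
      rcases hall k with rfl | rfl
      · rfl
      · exact absurd hz.1 (fun hh => hy.2 hh)
    · rintro rfl; exact hx
  have hBDA : B \ A = {y} := by
    ext z
    constructor
    · intro hz
      obtain ⟨k, rfl⟩ := lem1 z hz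
      rcases hall k with rfl | rfl
      · exact absurd hz.1 (fun hh => hx.2 hh)
      · rfl
    · rintro rfl; exact hy
  have hxy : x ≠ y := fun hh => hij (Sum.inl.inj hh)
  have hA : A = {y}ᶜ := by
    ext z
    simp only [Set.mem_compl_iff, Set.mem_singleton_iff]
    constructor
    · rintro hz rfl; exact hy.2 hz
    · intro hz
      have hzu : z ∈ A ∪ B := by rw [hcov]; trivial
      rcases hzu with hzA | hzB
      · exact hzA
      · by_contra hzA
        exact hz (by have : z ∈ B \ A := ⟨hzB, hzA⟩; rwa [hBDA] at this)
  have hB : B = {x}ᶜ := by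
    ext z
    simp only [Set.mem_compl_iff, Set.mem_singleton_iff]
    constructor
    · rintro hz rfl; exact hx.2 hz
    · intro hz
      have hzu : z ∈ A ∪ B := by rw [hcov]; trivial
      rcases hzu with hzA | hzB
      · by_contra hzB
        exact hz (by have : z ∈ A \ B := ⟨hzA, hzB⟩; rwa [hADB] at this)
      · exact hzB
  have hC : A ∩ B = ({x, y} : Set _)ᶜ := by
    rw [hA, hB, ← Set.compl_union, Set.union_comm, Set.singleton_union]
  -- cardinalities
  have hcard : Nat.card (Fin 2 ⊕ W) = 2 + Fintype.card W := by
    simp [Nat.card_eq_fintype_card]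
  refine ⟨1 + Fintype.card W, ?_, ?_, ?_, ?_, ?_⟩
  · rw [hA]
    have := Set.ncard_add_ncard_compl ({y} : Set (Fin 2 ⊕ W))
    rw [Set.ncard_singleton, hcard] at this
    omega
  · rw [hB]
    have := Set.ncard_add_ncard_compl ({x} : Set (Fin 2 ⊕ W))
    rw [Set.ncard_singleton, hcard] at this
    omega
  · rw [hC]
    have := Set.ncard_add_ncard_compl ({x, y} : Set (Fin 2 ⊕ W))
    rw [Set.ncard_pair hxy, hcard] at this
    omega
  · -- A is a clique
    intro a ha b hb hab
    rw [hA, Set.mem_compl_iff, Set.mem_singleton_iff] at ha hb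
    cases a with
    | inl k =>
      cases b with
      | inl l =>
        exfalso
        rcases hall k with rfl | rfl
        · rcases hall l with rfl | rfl
          · exact hab rfl
          · exact hb rfl
        · exact ha rfl
      | inr w => exact hcross k w
    | inr a' =>
      cases b with
      | inl l => exact (hcross l a').symm
      | inr b' =>
        refine hclique ?_ ?_ hab <;> rw [hC] <;> simp [hxdef, hydef]
  · -- B is a clique
    intro a ha b hb hab
    rw [hB, Set.mem_compl_iff, Set.mem_singleton_iff] at ha hb
    cases a with
    | inl k =>
      cases b with
      | inl l =>
        exfalso
        rcases hall k with rfl | rfl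
        · exact ha rfl
        · rcases hall l with rfl | rfl
          · exact hb rfl
          · exact hab rfl
      | inr w => exact hcross k w
    | inr a' =>
      cases b with
      | inl l => exact (hcross l a').symm
      | inr b' =>
        refine hclique ?_ ?_ hab <;> rw [hC] <;> simp [hxdef, hydef]
end

section
/- Let G = H * K_2 be the join of a graph H with K_2 (two new vertices adjacent to each other and to all of H). If H is a clique sum of H_1 and H_2 over a t-clique, then G is a clique sum of H_1 * K_2 and H_2 * K_2 over a (t+2)-clique. Conversely, if G is a clique sum of G_1 and G_2 over a clique C containing both join vertices v_1, v_2, then H = G \ {v_1, v_2} is a clique sum of G_1 \ {v_1, v_2} and G_2 \ {v_1, v_2} over C \ {v_1, v_2}. -/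
open SimpleGraph

/-- The join `H * K₂`: two new vertices adjacent to each other and to all of `H`. -/
def joinK2 {W : Type*} (H : SimpleGraph W) : SimpleGraph (W ⊕ Fin 2) :=
  (H ⊕g (⊤ : SimpleGraph (Fin 2))) ⊔
    SimpleGraph.fromRel (fun a b => a.isLeft = true ∧ b.isLeft = false)

lemma joinK2_adj_inl_inl {W : Type*} (H : SimpleGraph W) (a b : W) :
    (joinK2 H).Adj (.inl a) (.inl b) ↔ H.Adj a b := by simp [joinK2]

lemma joinK2_adj_inl_inr {W : Type*} (H : SimpleGraph W) (a : W) (i : Fin 2) :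
    (joinK2 H).Adj (.inl a) (.inr i) := by simp [joinK2]

lemma joinK2_adj_inr_inl {W : Type*} (H : SimpleGraph W) (a : W) (i : Fin 2) :
    (joinK2 H).Adj (.inr i) (.inl a) := by simp [joinK2]

lemma joinK2_adj_inr_inr {W : Type*} (H : SimpleGraph W) (i j : Fin 2) :
    (joinK2 H).Adj (.inr i) (.inr j) ↔ i ≠ j := by simp [joinK2]

/-- If `H` is a clique sum of `H₁, H₂` over a `t`-clique, then `H * K₂` is a clique sum of
`H₁ * K₂, H₂ * K₂` over a `(t+2)`-clique; conversely, a clique sum decomposition of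
`H * K₂` whose common clique contains both join vertices induces a clique sum
decomposition of `H` after deleting the two join vertices. -/
theorem stmt8 {W : Type*} [Fintype W] (H : SimpleGraph W) :
    (∀ (A B : Set W) (t : ℕ), H.IsCliqueSumDecomp A B → (A ∩ B).ncard = t →
      ∃ A' B' : Set (W ⊕ Fin 2),
        A' = Sum.inl '' A ∪ Set.range Sum.inr ∧
        B' = Sum.inl '' B ∪ Set.range Sum.inr ∧
        (joinK2 H).IsCliqueSumDecomp A' B' ∧ (A' ∩ B').ncard = t + 2) ∧
    (∀ A' B' : Set (W ⊕ Fin 2), (joinK2 H).IsCliqueSumDecomp A' B' →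
      Sum.inr 0 ∈ A' ∩ B' → Sum.inr 1 ∈ A' ∩ B' →
      H.IsCliqueSumDecomp (Sum.inl ⁻¹' A') (Sum.inl ⁻¹' B')) := by
  constructor
  · intro A B t hd ht
    obtain ⟨hU, hC, hE, ⟨a₀, ha₀⟩, ⟨b₀, hb₀⟩⟩ := hd
    refine ⟨Sum.inl '' A ∪ Set.range Sum.inr, Sum.inl '' B ∪ Set.range Sum.inr,
      rfl, rfl, ⟨?_, ?_, ?_, ?_, ?_⟩, ?_⟩
    · ext x
      rcases x with w | i
      · have hw : w ∈ A ∪ B := hU ▸ Set.mem_univ w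
        simp only [Set.mem_union, Set.mem_image, Set.mem_range, Set.mem_univ, iff_true]
        rcases hw with h | h
        · exact Or.inl (Or.inl ⟨w, h, rfl⟩)
        · exact Or.inr (Or.inl ⟨w, h, rfl⟩)
      · simp
    · intro x hx y hy hxy
      rcases x with w | i <;> rcases y with v | j
      · simp only [Set.mem_inter_iff, Set.mem_union, Set.mem_image, Set.mem_range,
          reduceCtorEq, exists_false, or_false] at hx hy
        obtain ⟨⟨u, hu, h⟩, ⟨u', hu', h'⟩⟩ := hx
        cases Sum.inl_injective h; cases Sum.inl_injective h'
        obtain ⟨⟨z, hz, g⟩, ⟨z', hz', g'⟩⟩ := hy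
        cases Sum.inl_injective g; cases Sum.inl_injective g'
        have hw : w ∈ A ∩ B := ⟨hu, hu'⟩
        have hv : v ∈ A ∩ B := ⟨hz, hz'⟩
        exact (joinK2_adj_inl_inl H w v).2
          (hC hw hv (fun h => hxy (congrArg Sum.inl h)))
      · exact joinK2_adj_inl_inr H w j
      · exact joinK2_adj_inr_inl H v i
      · exact (joinK2_adj_inr_inr H i j).2 (fun h => hxy (congrArg Sum.inr h))
    · intro x y hxy
      rcases x with w | i <;> rcases y with v | j
      · have : H.Adj w v := (joinK2_adj_inl_inl H w v).1 hxy
        rcases hE w v this with ⟨h1, h2⟩ | ⟨h1, h2⟩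
        · exact Or.inl ⟨Or.inl ⟨w, h1, rfl⟩, Or.inl ⟨v, h2, rfl⟩⟩
        · exact Or.inr ⟨Or.inl ⟨w, h1, rfl⟩, Or.inl ⟨v, h2, rfl⟩⟩
      · have hw : w ∈ A ∪ B := hU ▸ Set.mem_univ w
        rcases hw with h | h
        · exact Or.inl ⟨Or.inl ⟨w, h, rfl⟩, Or.inr ⟨j, rfl⟩⟩
        · exact Or.inr ⟨Or.inl ⟨w, h, rfl⟩, Or.inr ⟨j, rfl⟩⟩
      · have hv : v ∈ A ∪ B := hU ▸ Set.mem_univ v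
        rcases hv with h | h
        · exact Or.inl ⟨Or.inr ⟨i, rfl⟩, Or.inl ⟨v, h, rfl⟩⟩
        · exact Or.inr ⟨Or.inr ⟨i, rfl⟩, Or.inl ⟨v, h, rfl⟩⟩
      · exact Or.inl ⟨Or.inr ⟨i, rfl⟩, Or.inr ⟨j, rfl⟩⟩
    · refine ⟨Sum.inl a₀, Or.inl ⟨a₀, ha₀.1, rfl⟩, ?_⟩
      rintro (⟨u, hu, h⟩ | ⟨u, h⟩)
      · cases Sum.inl_injective h; exact ha₀.2 hu
      · exact absurd h.symm (by simp)
    · refine ⟨Sum.inl b₀, Or.inl ⟨b₀, hb₀.1, rfl⟩, ?_⟩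
      rintro (⟨u, hu, h⟩ | ⟨u, h⟩)
      · cases Sum.inl_injective h; exact hb₀.2 hu
      · exact absurd h.symm (by simp)
    · have hset : (Sum.inl '' A ∪ Set.range Sum.inr) ∩ (Sum.inl '' B ∪ Set.range Sum.inr)
          = Sum.inl '' (A ∩ B) ∪ Set.range (Sum.inr : Fin 2 → W ⊕ Fin 2) := by
        ext x
        rcases x with w | i
        · simp [Set.mem_image]
        · simp
      rw [hset, Set.ncard_union_eq (by
          rw [Set.disjoint_iff_inter_eq_empty]
          ext x; rcases x with w | i <;> simp) (Set.toFinite _) (Set.toFinite _),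
        Set.ncard_image_of_injective _ Sum.inl_injective, ht]
      congr 1
      have : (Set.range (Sum.inr : Fin 2 → W ⊕ Fin 2))
          = {Sum.inr 0, Sum.inr 1} := by
        ext x; rcases x with w | i
        · simp
        · fin_cases i <;> simp
      rw [this, Set.ncard_pair (by simp)]
  · intro A' B' hd h0 h1
    obtain ⟨hU, hC, hE, ⟨x₀, hx₀⟩, ⟨y₀, hy₀⟩⟩ := hd
    refine ⟨?_, ?_, ?_, ?_, ?_⟩
    · ext w
      have : Sum.inl w ∈ A' ∪ B' := hU ▸ Set.mem_univ _
      simpa using this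
    · intro a ha b hb hab
      have := hC (Set.mem_inter ha.1 ha.2) (Set.mem_inter hb.1 hb.2)
        (fun h => hab (Sum.inl_injective h))
      exact (joinK2_adj_inl_inl H a b).1 this
    · intro a b hab
      exact hE (Sum.inl a) (Sum.inl b) ((joinK2_adj_inl_inl H a b).2 hab)
    · rcases x₀ with w | i
      · exact ⟨w, hx₀.1, hx₀.2⟩
      · exfalso; fin_cases i
        · exact hx₀.2 h0.2
        · exact hx₀.2 h1.2
    · rcases y₀ with w | i
      · exact ⟨w, hy₀.1, hy₀.2⟩
      · exfalso; fin_cases i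
        · exact hy₀.2 h0.1
        · exact hy₀.2 h1.1
end

section
/- Let G be a 2-connected graph with a 2-element vertex cut S = {x, y}, and let G_1, ..., G_r be the connected components of G \ S. Then each of x and y has at least one neighbor in each G_i, and for any i ≠ j, the induced subgraph on G_i ∪ S together with an added edge xy is a minor of the induced subgraph on G_i ∪ G_j ∪ S (obtained by contracting G_j to a path joining x and y). -/
open SimpleGraph

/-- `H` is a minor of `G`. -/
def SimpleGraph.IsMinorOf {W V : Type*} (H : SimpleGraph W) (G : SimpleGraph V) : Prop :=
  ∃ f : W → Set V,
    (∀ w, (f w).Nonempty) ∧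
    (∀ w, (G.induce (f w)).Connected) ∧
    (∀ w₁ w₂, w₁ ≠ w₂ → Disjoint (f w₁) (f w₂)) ∧
    ∀ w₁ w₂, H.Adj w₁ w₂ → ∃ v₁ ∈ f w₁, ∃ v₂ ∈ f w₂, G.Adj v₁ v₂

/-- `G` is `k`-connected. -/
def SimpleGraph.IsKConnected {V : Type*} [Fintype V] (G : SimpleGraph V) (k : ℕ) : Prop :=
  k < Fintype.card V ∧ ∀ S : Set V, S.ncard < k → (G.induce (Sᶜ : Set V)).Connected


lemma conn_of_subsingleton {V : Type*} (G : SimpleGraph V) (A : Set V)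
    (hne : A.Nonempty) (hs : A.Subsingleton) : (G.induce A).Connected := by
  haveI : Nonempty A := ⟨⟨hne.choose, hne.choose_spec⟩⟩
  refine ⟨fun a b => ?_⟩
  have : a = b := Subtype.ext (hs a.2 b.2)
  rw [this]

lemma aux_nbr {V : Type*} (G : SimpleGraph V) (z w : V) (hzw : z ≠ w)
    (hconn : (G.induce ({w}ᶜ : Set V)).Connected)
    (S : Set V) (hS : S = {z, w})
    (c : (G.induce (Sᶜ : Set V)).ConnectedComponent) :
    ∃ u ∈ Subtype.val '' c.supp, G.Adj z u := by
  subst hS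
  obtain ⟨v, hv⟩ := c.exists_rep
  have hvw : (v : V) ≠ w := fun h => v.2 (by simp [h])
  have hz : z ∈ ({w}ᶜ : Set V) := hzw
  obtain ⟨p⟩ := hconn.preconnected ⟨(v : V), hvw⟩ ⟨z, hz⟩
  suffices H : ∀ (a b : ({w}ᶜ : Set V)), (G.induce ({w}ᶜ : Set V)).Walk a b →
      (b : V) = z →
      (a : V) ∈ Subtype.val '' c.supp → ∃ u ∈ Subtype.val '' c.supp, G.Adj z u by
    exact H _ _ p rfl ⟨v, (c.mem_supp_iff v).2 hv, rfl⟩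
  intro a b p
  induction p with
  | nil =>
    intro hbz ha
    obtain ⟨a', ha', hval⟩ := ha
    exact absurd (by simp [hval, hbz] : (a' : V) ∈ ({z, w} : Set V)) a'.2
  | @cons a b _ had p ih =>
    intro hbz ha
    by_cases hb : (b : V) ∈ Subtype.val '' c.supp
    · exact ih hbz hb
    · have hGa : G.Adj (a : V) (b : V) := had
      by_cases hbz' : (b : V) = z
      · exact ⟨a, ha, by rw [← hbz']; exact hGa.symm⟩
      · exfalso
        apply hb
        have hbmem : (b : V) ∈ (({z, w} : Set V)ᶜ) := by
          intro hmem
          rcases hmem with h1 | h2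
          · exact hbz' h1
          · exact b.2 h2
        obtain ⟨a', ha', hval⟩ := ha
        have hadj : (G.induce (({z, w} : Set V)ᶜ)).Adj a' ⟨(b : V), hbmem⟩ := by
          show G.Adj (a' : V) (b : V)
          rw [hval]; exact hGa
        have hm : (⟨(b : V), hbmem⟩ : (({z, w} : Set V)ᶜ : Set V)) ∈ c.supp := by
          rw [ConnectedComponent.mem_supp_iff, ← (c.mem_supp_iff a').1 ha']
          exact (ConnectedComponent.eq).2 hadj.reachable.symm
        exact ⟨_, hm, rfl⟩


lemma reach_in_induce {V : Type*} (G : SimpleGraph V) (S Big : Set V) (B : Set (Big : Set V))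
    (d : (G.induce (Sᶜ : Set V)).ConnectedComponent)
    (hBig : ∀ v ∈ Subtype.val '' d.supp, v ∈ Big)
    (hB : ∀ (v) (h : v ∈ Subtype.val '' d.supp), (⟨v, hBig v h⟩ : (Big : Set V)) ∈ B)
    (s t : B) (hs : ((s : (Big : Set V)) : V) ∈ Subtype.val '' d.supp)
    (ht : ((t : (Big : Set V)) : V) ∈ Subtype.val '' d.supp) :
    ((G.induce Big).induce B).Reachable s t := by
  obtain ⟨a, ha, hav⟩ := hs
  obtain ⟨b, hb, hbv⟩ := ht
  have hr : (G.induce (Sᶜ : Set V)).Reachable a b := by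
    refine ConnectedComponent.eq.1 ?_
    rw [(d.mem_supp_iff a).1 ha, (d.mem_supp_iff b).1 hb]
  obtain ⟨p⟩ := hr

  induction p generalizing s with
  | nil =>
    have : s = t := Subtype.ext (Subtype.ext (hav.symm.trans hbv))
    rw [this]
  | @cons a a₁ _ had p ih =>
    have ha₁ : a₁ ∈ d.supp := by
      rw [ConnectedComponent.mem_supp_iff, ← (d.mem_supp_iff a).1 ha]
      exact (ConnectedComponent.eq).2 had.reachable.symm
    have hm : (a₁ : V) ∈ Subtype.val '' d.supp := ⟨a₁, ha₁, rfl⟩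
    have hadj : ((G.induce Big).induce B).Adj s ⟨⟨(a₁ : V), hBig _ hm⟩, hB _ hm⟩ := by
      show G.Adj ((s : (Big : Set V)) : V) (a₁ : V)
      rw [← hav]; exact had
    exact hadj.reachable.trans (ih _ ha₁ rfl hb hbv)

/-- Let `G` be 2-connected with vertex cut `S = {x, y}`. Then each of `x` and `y` has a
neighbor in every connected component of `G \ S`, and for components `c ≠ d`, the graph
induced on `c ∪ S` together with an added edge `xy` is a minor of the graph induced on
`c ∪ d ∪ S`. -/
theorem stmt13 {V : Type*} [Fintype V] (G : SimpleGraph V) (x y : V) (hxy : x ≠ y)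
    (h2 : G.IsKConnected 2)
    (hcut : ¬ (G.induce (({x, y} : Set V)ᶜ)).Connected) :
    (∀ c : (G.induce (({x, y} : Set V)ᶜ)).ConnectedComponent,
      (∃ u ∈ Subtype.val '' c.supp, G.Adj x u) ∧
      (∃ u ∈ Subtype.val '' c.supp, G.Adj y u)) ∧
    (∀ c d : (G.induce (({x, y} : Set V)ᶜ)).ConnectedComponent, c ≠ d →
      ((G.induce ((Subtype.val '' c.supp) ∪ {x, y})) ⊔
          SimpleGraph.fromEdgeSet
            {s((⟨x, Set.mem_union_right _ (by simp)⟩ :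
                  ((Subtype.val '' c.supp) ∪ {x, y} : Set V)),
               ⟨y, Set.mem_union_right _ (by simp)⟩)}).IsMinorOf
        (G.induce ((Subtype.val '' c.supp) ∪ (Subtype.val '' d.supp) ∪ {x, y}))) := by
  classical
  have hcy : (G.induce (({y} : Set V)ᶜ)).Connected := h2.2 {y} (by simp)
  have hcx : (G.induce (({x} : Set V)ᶜ)).Connected := h2.2 {x} (by simp)
  have part1 : ∀ c : (G.induce (({x, y} : Set V)ᶜ)).ConnectedComponent,
      (∃ u ∈ Subtype.val '' c.supp, G.Adj x u) ∧
      (∃ u ∈ Subtype.val '' c.supp, G.Adj y u) := fun c =>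
    ⟨aux_nbr G x y hxy hcy {x, y} rfl c,
     aux_nbr G y x hxy.symm hcx {x, y} (Set.pair_comm x y) c⟩
  refine ⟨part1, ?_⟩
  intro c d hcd
  set Sc : Set V := Subtype.val '' c.supp with hSc
  set Sd : Set V := Subtype.val '' d.supp with hSd
  set Big : Set V := Sc ∪ Sd ∪ {x, y} with hBigdef
  set Small : Set V := Sc ∪ {x, y} with hSmalldef
  have hSdB : ∀ v ∈ Sd, v ∈ Big := fun v h => Or.inl (Or.inr h)
  have hxB : x ∈ Big := Or.inr (Or.inl rfl)
  have hyB : y ∈ Big := Or.inr (Or.inr rfl)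
  have hSmallB : ∀ v ∈ Small, v ∈ Big := by
    rintro v (h | h)
    · exact Or.inl (Or.inl h)
    · exact Or.inr h
  -- Sd avoids x, y, and Sc
  have hSdavoid : ∀ v ∈ Sd, v ∈ (({x, y} : Set V)ᶜ) := by
    rintro v ⟨a, _, rfl⟩; exact a.2
  have hScavoid : ∀ v ∈ Sc, v ∈ (({x, y} : Set V)ᶜ) := by
    rintro v ⟨a, _, rfl⟩; exact a.2
  have hScSd : ∀ v ∈ Sc, v ∉ Sd := by
    rintro v ⟨a, ha, rfl⟩ ⟨b, hb, hba⟩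
    apply hcd
    rw [← (c.mem_supp_iff a).1 ha, ← (d.mem_supp_iff b).1 hb]
    congr 1
    exact Subtype.ext hba.symm
  set B : Set ↥Big := {t | (t : V) = y ∨ (t : V) ∈ Sd} with hBdef
  set f : ↥Small → Set ↥Big :=
    fun w => if (w : V) = y then B else {t | (t : V) = (w : V)} with hf
  have hmemf : ∀ w : ↥Small, (⟨(w : V), hSmallB _ w.2⟩ : ↥Big) ∈ f w := by
    intro w
    by_cases h : (w : V) = y
    · simp only [hf]; rw [if_pos h]; exact Or.inl h
    · simp only [hf]; rw [if_neg h]; exact rfl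
  refine ⟨f, ?_, ?_, ?_, ?_⟩
  · intro w; exact ⟨_, hmemf w⟩
  · intro w
    by_cases h : (w : V) = y
    · have hfw : f w = B := if_pos h
      rw [hfw]
      have hy0 : (⟨y, hyB⟩ : ↥Big) ∈ B := Or.inl rfl
      haveI : Nonempty ↥B := ⟨⟨⟨y, hyB⟩, hy0⟩⟩
      refine ⟨fun s t => ?_⟩
      · suffices hkey : ∀ s : B, ((G.induce Big).induce B).Reachable s ⟨⟨y, hyB⟩, hy0⟩ by
          exact (hkey s).trans (hkey t).symm
        intro s
        rcases s.2 with hs | hs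
        · have : s = ⟨⟨y, hyB⟩, hy0⟩ := Subtype.ext (Subtype.ext hs)
          rw [this]
        · obtain ⟨u₀, hu₀, hadjy⟩ := (part1 d).2
          have hu₀B : (⟨u₀, hSdB u₀ hu₀⟩ : ↥Big) ∈ B := Or.inr hu₀
          have hstep : ((G.induce Big).induce B).Reachable s ⟨⟨u₀, hSdB u₀ hu₀⟩, hu₀B⟩ :=
            reach_in_induce G {x, y} Big B d hSdB (fun v hv => Or.inr hv) s _ hs hu₀
          have hyadj : ((G.induce Big).induce B).Adj ⟨⟨u₀, hSdB u₀ hu₀⟩, hu₀B⟩ ⟨⟨y, hyB⟩, hy0⟩ :=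
            hadjy.symm
          exact hstep.trans hyadj.reachable
    · have hfw : f w = {t : ↥Big | (t : V) = (w : V)} := if_neg h
      rw [hfw]
      refine conn_of_subsingleton _ _ ⟨_, (rfl : ((⟨(w : V), hSmallB _ w.2⟩ : ↥Big) : V) = (w : V))⟩ ?_
      intro a ha b hb
      exact Subtype.ext (ha.trans hb.symm)
  · intro w₁ w₂ hne
    rw [Set.disjoint_left]
    intro t ht1 ht2
    by_cases h1 : (w₁ : V) = y <;> by_cases h2 : (w₂ : V) = y
    · exact hne (Subtype.ext (h1.trans h2.symm))
    · simp only [hf] at ht1 ht2; rw [if_pos h1] at ht1; rw [if_neg h2] at ht2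
      rcases ht1 with hh | hh
      · exact h2 (ht2.symm.trans hh)
      · have : (w₂ : V) ∈ Sd := ht2 ▸ hh
        rcases w₂.2 with hc | hxy2
        · exact hScSd _ hc this
        · rcases hxy2 with h | h
          · exact hSdavoid _ this (Or.inl h)
          · exact h2 h
    · simp only [hf] at ht1 ht2; rw [if_neg h1] at ht1; rw [if_pos h2] at ht2
      rcases ht2 with hh | hh
      · exact h1 (ht1.symm.trans hh)
      · have : (w₁ : V) ∈ Sd := ht1 ▸ hh
        rcases w₁.2 with hc | hxy1
        · exact hScSd _ hc this
        · rcases hxy1 with h | h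
          · exact hSdavoid _ this (Or.inl h)
          · exact h1 h
    · simp only [hf] at ht1 ht2; rw [if_neg h1] at ht1; rw [if_neg h2] at ht2
      exact hne (Subtype.ext (ht1.symm.trans ht2))
  · intro w₁ w₂ hadj
    rcases hadj with hG | hE
    · exact ⟨_, hmemf w₁, _, hmemf w₂, hG⟩
    · rw [fromEdgeSet_adj, Set.mem_singleton_iff, Sym2.eq_iff] at hE
      obtain ⟨u₁, hu₁, hadjx⟩ := (part1 d).1
      have hu₁B : (⟨u₁, hSdB u₁ hu₁⟩ : ↥Big) ∈ B := Or.inr hu₁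
      have hfx : ∀ w : ↥Small, (w : V) = x →
          (⟨x, hxB⟩ : ↥Big) ∈ f w := by
        intro w hw
        simp only [hf]; rw [hw, if_neg hxy]; exact rfl
      have hfy : ∀ w : ↥Small, (w : V) = y →
          (⟨u₁, hSdB u₁ hu₁⟩ : ↥Big) ∈ f w := by
        intro w hw
        simp only [hf]; rw [if_pos hw]; exact hu₁B
      rcases hE.1 with ⟨hw1, hw2⟩ | ⟨hw1, hw2⟩
      · refine ⟨_, hfx w₁ (by rw [hw1]), _, hfy w₂ (by rw [hw2]), ?_⟩
        exact hadjx
      · refine ⟨_, hfy w₁ (by rw [hw1]), _, hfx w₂ (by rw [hw2]), ?_⟩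
        exact hadjx.symm
end
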